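/- For all real numbers $M_1, M_2 \geq 0$ and all $\alpha > 0$, one has $(M_1^{\alpha+1} - M_2^{\alpha+1})(M_1 - M_2) \geq \frac{\alpha+1}{(1+\alpha/2)^2} \left(M_1^{1+\alpha/2} - M_2^{1+\alpha/2}\right)^2$. -/

import Mathlib

/-!
Put `β = 1 + α / 2`, so that `2β - 1 = α + 1`. Then `x ^ β - y ^ β = β ∫_y^x t ^ (β - 1) dt`, and
Cauchy–Schwarz on `[y, x]` bounds its square by
`β² (x - y) ∫_y^x t ^ (2β - 2) dt = β² (x - y) (x ^ (2β - 1) - y ^ (2β - 1)) / (2β - 1)`.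
-/

open Real Set intervalIntegral
open MeasureTheory (volume)

theorem sq_intervalIntegral_le_mul_intervalIntegral_sq {f : ℝ → ℝ} {a b : ℝ} (hab : a ≤ b)
    (hf : IntervalIntegrable f volume a b)
    (hf2 : IntervalIntegrable (fun t => f t ^ 2) volume a b) :
    (∫ t in a..b, f t) ^ 2 ≤ (b - a) * ∫ t in a..b, f t ^ 2 := by
  set I := ∫ t in a..b, f t
  set J := ∫ t in a..b, f t ^ 2
  rcases hab.eq_or_lt with rfl | hlt
  · simp [I]
  have hexpand : ∫ t in a..b, ((b - a) * f t - I) ^ 2 = (b - a) * ((b - a) * J - I ^ 2) := by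
    have h : ∀ t, ((b - a) * f t - I) ^ 2 = (b - a) ^ 2 * f t ^ 2 - 2 * (b - a) * I * f t + I ^ 2 :=
      fun t => by ring
    simp_rw [h]
    rw [integral_add (hf2.const_mul _ |>.sub (hf.const_mul _)) intervalIntegrable_const,
      integral_sub (hf2.const_mul _) (hf.const_mul _), integral_const_mul, integral_const_mul,
      integral_const, smul_eq_mul]
    ring
  have hvar : 0 ≤ ∫ t in a..b, ((b - a) * f t - I) ^ 2 :=
    integral_nonneg hab fun t _ => sq_nonneg _
  rw [hexpand] at hvar
  linarith [(mul_nonneg_iff_of_pos_left (sub_pos.2 hlt)).1 hvar]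

theorem integral_rpow_sub_one {x y β : ℝ} (hβ : 0 < β) :
    ∫ t in y..x, t ^ (β - 1) = (x ^ β - y ^ β) / β := by
  rw [integral_rpow (Or.inl (by linarith)), sub_add_cancel]

theorem sq_rpow_sub_rpow_le {x y β : ℝ} (hx : 0 ≤ x) (hy : 0 ≤ y) (hβ : 1 / 2 < β) :
    (2 * β - 1) / β ^ 2 * (x ^ β - y ^ β) ^ 2 ≤ (x ^ (2 * β - 1) - y ^ (2 * β - 1)) * (x - y) := by
  wlog hyx : y ≤ x generalizing x y
  · convert this hy hx (le_of_not_ge hyx) using 1 <;> ring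
  have hsq : EqOn (fun t => (t ^ (β - 1)) ^ 2) (fun t => t ^ (2 * β - 1 - 1)) (uIcc y x) := by
    intro t ht
    rw [uIcc_of_le hyx] at ht
    simp only [← rpow_mul_natCast (hy.trans ht.1)]
    ring_nf
  have hcs := sq_intervalIntegral_le_mul_intervalIntegral_sq hyx
    (intervalIntegrable_rpow' (r := β - 1) (by linarith))
    ((intervalIntegrable_rpow' (r := 2 * β - 1 - 1) (by linarith)).congr
      (hsq.symm.mono uIoc_subset_uIcc))
  rw [integral_congr hsq, integral_rpow_sub_one (by linarith),
    integral_rpow_sub_one (by linarith)] at hcs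
  have h2β : 0 < 2 * β - 1 := by linarith
  calc (2 * β - 1) / β ^ 2 * (x ^ β - y ^ β) ^ 2
      = (2 * β - 1) * ((x ^ β - y ^ β) / β) ^ 2 := by ring
    _ ≤ (2 * β - 1) * ((x - y) * ((x ^ (2 * β - 1) - y ^ (2 * β - 1)) / (2 * β - 1))) := by
      gcongr
    _ = (x ^ (2 * β - 1) - y ^ (2 * β - 1)) * (x - y) := by field_simp

theorem stmt_0 (M₁ M₂ α : ℝ) (hM₁ : 0 ≤ M₁) (hM₂ : 0 ≤ M₂) (hα : 0 < α) :
    (M₁ ^ (α + 1) - M₂ ^ (α + 1)) * (M₁ - M₂) ≥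
      (α + 1) / (1 + α / 2) ^ 2 * (M₁ ^ (1 + α / 2) - M₂ ^ (1 + α / 2)) ^ 2 := by
  have h := sq_rpow_sub_rpow_le hM₁ hM₂ (β := 1 + α / 2) (by linarith)
  rwa [show 2 * (1 + α / 2) - 1 = α + 1 by ring] at h
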